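/- Let (X,d) be a proper metric space with a fixed basepoint x₀ and with no isolated points, and let (D_n) be a sequence of Delone subsets of X with R(D_n) ≤ 1 for all n and ρ(D_n, X) → 0 as n → ∞. Then lim_{n→∞} r(D_n) = 0. -/

import Mathlib

/-!
Since `x₀` is not isolated, there is a point `y ≠ x₀` at some small distance `d`. Once
`ρ(D_n, X) < d / 3`, both `x₀` and `y` lie within `d / 3` of `D_n`; the two approximating points
of `D_n` are then distinct and at distance less than `5 d / 3`, so `r(D_n) < 5 d / 3`.
-/

open Metric Set Filter MeasureTheory

variable {X : Type*} [MetricSpace X]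

/-- The metric ρ on subsets of `X` (with basepoint `x₀`), following Smilansky–Solomon. -/
noncomputable def rho (x₀ : X) (D₁ D₂ : Set X) : ℝ :=
  sInf ({ε : ℝ | 0 < ε ∧ D₁ ∩ ball x₀ (1 / ε) ⊆ thickening ε D₂ ∧
      D₂ ∩ ball x₀ (1 / ε) ⊆ thickening ε D₁} ∪ {1})

/-- `D` is `s`-discrete: distinct points of `D` are at distance at least `s`. -/
def IsDiscreteWith (s : ℝ) (D : Set X) : Prop :=
  ∀ x ∈ D, ∀ y ∈ D, x ≠ y → s ≤ dist x y

/-- `D` is `R`-dense: every point of `X` is within distance `R` of `D`. -/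
def IsDenseWith (R : ℝ) (D : Set X) : Prop :=
  ∀ x : X, ∃ y ∈ D, dist x y ≤ R

/-- `D` is a Delone set: `r`-discrete and `R`-dense for some `r, R > 0`. -/
def IsDelone (D : Set X) : Prop :=
  ∃ r > (0 : ℝ), ∃ R > (0 : ℝ), IsDiscreteWith r D ∧ IsDenseWith R D

/-- `r(D)`: the infimum of distances between distinct points of `D`. -/
noncomputable def rSep (D : Set X) : ℝ :=
  sInf {t : ℝ | ∃ x ∈ D, ∃ y ∈ D, x ≠ y ∧ t = dist x y}

/-- `R(D)`: the infimum of the `R` such that `D` is `R`-dense. -/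
noncomputable def RDen (D : Set X) : ℝ :=
  sInf {R : ℝ | IsDenseWith R D}

/-- A control function: a monotone continuous `F : [0,1] → [0,1]` with `F 0 = 0`. -/
def IsControlFunction (F : ℝ → ℝ) : Prop :=
  MonotoneOn F (Icc 0 1) ∧ ContinuousOn F (Icc 0 1) ∧
    MapsTo F (Icc 0 1) (Icc 0 1) ∧ F 0 = 0

/-- A Delone set is controlled by `F` if `R(D) ≥ R` implies `r(D) ≥ F R` for `R ∈ [0,1]`. -/
def ControlledBy (F : ℝ → ℝ) (D : Set X) : Prop :=
  ∀ R ∈ Icc (0 : ℝ) 1, R ≤ RDen D → F R ≤ rSep D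

/-- `𝒟_F`: the Delone sets `D ⊆ X` with `R(D) ≤ 1` that are controlled by `F`. -/
def DeloneFamily (F : ℝ → ℝ) : Set (Set X) :=
  {D : Set X | IsDelone D ∧ RDen D ≤ 1 ∧ ControlledBy F D}

lemma exists_ne_dist_lt_of_not_isOpen_singleton {x : X} (hx : ¬ IsOpen ({x} : Set X))
    {ε : ℝ} (hε : 0 < ε) : ∃ y, y ≠ x ∧ dist y x < ε := by
  by_contra! h
  exact hx (isOpen_singleton_iff.2 ⟨ε, hε, fun y hy => by_contra fun hne => (h y hne).not_gt hy⟩)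

lemma rSep_nonneg (D : Set X) : 0 ≤ rSep D :=
  Real.sInf_nonneg fun _ ⟨_, _, _, _, _, ht⟩ => ht ▸ dist_nonneg

lemma rSep_le_dist {D : Set X} {x y : X} (hx : x ∈ D) (hy : y ∈ D) (hxy : x ≠ y) :
    rSep D ≤ dist x y :=
  csInf_le ⟨0, fun _ ⟨_, _, _, _, _, ht⟩ => ht ▸ dist_nonneg⟩ ⟨x, hx, y, hy, hxy, rfl⟩

lemma rSep_lt_of_mem_thickening {D : Set X} {ε : ℝ} {x y : X} (hx : x ∈ thickening ε D)
    (hy : y ∈ thickening ε D) (hxy : 2 * ε < dist x y) : rSep D < dist x y + 2 * ε := by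
  obtain ⟨p, hp, hxp⟩ := mem_thickening_iff.1 hx
  obtain ⟨q, hq, hyq⟩ := mem_thickening_iff.1 hy
  have hpq_lower : dist x y < dist p q + 2 * ε := by
    linarith [dist_triangle4 x p q y, dist_comm q y]
  have hpq_upper : dist p q < dist x y + 2 * ε := by
    linarith [dist_triangle4 p x y q, dist_comm p x]
  have hpq : p ≠ q := by
    rintro rfl
    rw [dist_self] at hpq_lower
    linarith
  exact (rSep_le_dist hp hq hpq).trans_lt hpq_upper

/-- The value `1` in the definition of `rho` caps it, so only `ε ≤ 1` carries information. -/
lemma subset_thickening_of_rho_lt {x₀ : X} {D₁ D₂ : Set X} {ε : ℝ} (hε : ε ≤ 1)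
    (h : rho x₀ D₁ D₂ < ε) :
    D₁ ∩ ball x₀ (1 / ε) ⊆ thickening ε D₂ ∧ D₂ ∩ ball x₀ (1 / ε) ⊆ thickening ε D₁ := by
  have hbdd : BddBelow ({e : ℝ | 0 < e ∧ D₁ ∩ ball x₀ (1 / e) ⊆ thickening e D₂ ∧
      D₂ ∩ ball x₀ (1 / e) ⊆ thickening e D₁} ∪ {1}) := by
    refine ⟨0, ?_⟩
    rintro e (he | rfl)
    exacts [he.1.le, zero_le_one]
  obtain ⟨e, he, heε⟩ := (csInf_lt_iff hbdd ⟨1, Or.inr rfl⟩).1 h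
  rcases he with ⟨he0, h₁, h₂⟩ | rfl
  · have hball : ball x₀ (1 / ε) ⊆ ball x₀ (1 / e) :=
      ball_subset_ball (one_div_le_one_div_of_le he0 heε.le)
    exact ⟨fun z hz => thickening_mono heε.le _ (h₁ ⟨hz.1, hball hz.2⟩),
      fun z hz => thickening_mono heε.le _ (h₂ ⟨hz.1, hball hz.2⟩)⟩
  · exact absurd hε heε.not_ge

theorem rSep_tendsto_zero_general {X : Type*} [MetricSpace X]
    (x₀ : X) (hiso : ∀ x : X, ¬ IsOpen ({x} : Set X))
    (D : ℕ → Set X)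
    (hconv : Tendsto (fun n => rho x₀ (D n) (Set.univ : Set X)) atTop (nhds 0)) :
    Tendsto (fun n => rSep (D n)) atTop (nhds 0) := by
  refine tendsto_order.2 ⟨fun a ha => Eventually.of_forall fun n => ha.trans_le (rSep_nonneg _),
    fun δ hδ => ?_⟩
  obtain ⟨y, hy, hyδ⟩ :=
    exists_ne_dist_lt_of_not_isOpen_singleton (hiso x₀) (lt_min (half_pos hδ) one_pos)
  set d := dist y x₀
  have hd : 0 < d := dist_pos.2 hy
  have hdδ : d < δ / 2 := hyδ.trans_le (min_le_left _ _)
  have hd1 : d < 1 := hyδ.trans_le (min_le_right _ _)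
  have hd_ball : d < 1 / (d / 3) := by
    rw [lt_div_iff₀ (by positivity)]
    nlinarith
  filter_upwards [hconv.eventually (gt_mem_nhds (by positivity : (0 : ℝ) < d / 3))] with n hn
  have hnear : ∀ z, dist z x₀ ≤ d → z ∈ thickening (d / 3) (D n) := fun z hz =>
    (subset_thickening_of_rho_lt (by linarith) hn).2 ⟨mem_univ z, hz.trans_lt hd_ball⟩
  calc rSep (D n) < dist y x₀ + 2 * (d / 3) :=
        rSep_lt_of_mem_thickening (hnear y le_rfl) (hnear x₀ (by simp [hd.le])) (by linarith)
    _ < δ := by linarith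

/-- If `X` is proper with no isolated points and `D_n` are Delone sets with `R(D_n) ≤ 1`
converging to `X` in `ρ`, then `r(D_n) → 0`. -/
theorem rSep_tendsto_zero {X : Type*} [MetricSpace X] [ProperSpace X]
    (x₀ : X) (hiso : ∀ x : X, ¬ IsOpen ({x} : Set X))
    (D : ℕ → Set X) (hD : ∀ n, IsDelone (D n)) (hRD : ∀ n, RDen (D n) ≤ 1)
    (hconv : Tendsto (fun n => rho x₀ (D n) (Set.univ : Set X)) atTop (nhds 0)) :
    Tendsto (fun n => rSep (D n)) atTop (nhds 0) :=
  rSep_tendsto_zero_general x₀ hiso D hconv
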